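/- arXiv:2602.06776 — 4 statements merged into one kernel-verified Lean document; each statement's English description precedes it below -/
import Mathlib

section
/- Fix λ ∈ [0,1]. For every real number q > 0, the minimum of 1 + (λ+1)·q and (λ+2) + 2/q is at most (λ + 3 + √(λ² + 10λ + 9))/2, and equality holds at q = (λ + 1 + √(λ² + 10λ + 9)) / (2(λ+1)). -/
theorem stmt_3 (lam : ℝ) (h0 : 0 ≤ lam) (h1 : lam ≤ 1) :
    (∀ q : ℝ, 0 < q →
      min (1 + (lam + 1) * q) ((lam + 2) + 2 / q) ≤
        (lam + 3 + Real.sqrt (lam ^ 2 + 10 * lam + 9)) / 2) ∧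
    min (1 + (lam + 1) * ((lam + 1 + Real.sqrt (lam ^ 2 + 10 * lam + 9)) / (2 * (lam + 1))))
        ((lam + 2) + 2 / ((lam + 1 + Real.sqrt (lam ^ 2 + 10 * lam + 9)) / (2 * (lam + 1)))) =
      (lam + 3 + Real.sqrt (lam ^ 2 + 10 * lam + 9)) / 2 := by
  set s := Real.sqrt (lam ^ 2 + 10 * lam + 9) with hsdef
  have hs2 : s * s = lam ^ 2 + 10 * lam + 9 := Real.mul_self_sqrt (by nlinarith)
  have hs0 : 0 ≤ s := Real.sqrt_nonneg _
  have hsgt : lam + 1 < s := by nlinarith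
  have hl1 : (0:ℝ) < lam + 1 := by linarith
  set qs : ℝ := (lam + 1 + s) / (2 * (lam + 1)) with hqs
  have hqspos : 0 < qs := by positivity
  have ha : 1 + (lam + 1) * qs = (lam + 3 + s) / 2 := by
    rw [hqs]; field_simp; ring
  have hb : (lam + 2) + 2 / qs = (lam + 3 + s) / 2 := by
    rw [hqs]
    rw [div_div_eq_mul_div]
    have hne : lam + 1 + s ≠ 0 := by positivity
    field_simp
    nlinarith [hs2]
  refine ⟨?_, ?_⟩
  · intro q hq
    by_cases hcase : q ≤ qs
    · refine le_trans (min_le_left _ _) ?_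
      have := mul_le_mul_of_nonneg_left hcase hl1.le
      nlinarith [ha]
    · refine le_trans (min_le_right _ _) ?_
      push_neg at hcase
      have h2 : 2 / q ≤ 2 / qs :=
        div_le_div_of_nonneg_left (by norm_num) hqspos hcase.le
      linarith [hb]
  · rw [ha, hb, min_self]
end

section
/- Fix λ ∈ (0,1]. For every real number q > 0, the minimum of λ·q and 1 + λ + 1/q is at most (λ + 1 + √(λ² + 6λ + 1))/2. -/
theorem stmt_4 (lam : ℝ) (h0 : 0 < lam) (h1 : lam ≤ 1) :
    ∀ q : ℝ, 0 < q →
      min (lam * q) (1 + lam + 1 / q) ≤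
        (lam + 1 + Real.sqrt (lam ^ 2 + 6 * lam + 1)) / 2 := by
  intro q hq
  set D := lam ^ 2 + 6 * lam + 1 with hD
  have hDpos : 0 ≤ D := by nlinarith
  have hs := Real.sq_sqrt hDpos
  have hsnn := Real.sqrt_nonneg D
  set s := (lam + 1 + Real.sqrt D) / 2 with hsdef
  have hspos : 0 < s := by rw [hsdef]; nlinarith
  have hkey : s ^ 2 = (lam + 1) * s + lam := by
    rw [hsdef]; nlinarith [hs]
  rcases le_or_gt (lam * q) s with h | h
  · exact le_trans (min_le_left _ _) h
  · refine le_trans (min_le_right _ _) ?_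
    have hqinv : 1 / q ≤ lam / s := by
      rw [div_le_div_iff₀ hq hspos]; nlinarith
    have hfin : 1 + lam + lam / s = s := by
      field_simp
      nlinarith [hkey]
    linarith
end

section
/- Fix λ ∈ (0,1]. For every real number q > 0, the minimum of q + 1 + 1/λ and 1/(λ·q) is at most (√(λ² + 6λ + 1) + λ + 1)/(2λ), with equality at q = (√(λ² + 6λ + 1) − λ − 1)/(2λ). -/
/-! The map `q ↦ q + 1 + 1/λ` increases and `q ↦ 1/(λq)` decreases on `(0, ∞)`, so the minimum of the
two is largest where they cross. The crossing point is the positive root of `λq² + (λ+1)q - 1 = 0`,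
and `(s - λ - 1)(s + λ + 1) = 4λ` for `s = √(λ² + 6λ + 1)` evaluates both sides there. -/

open Real

theorem min_le_of_monotoneOn_of_antitoneOn {α β : Type*} [LinearOrder α] [LinearOrder β]
    {s : Set α} {f g : α → β} (hf : MonotoneOn f s) (hg : AntitoneOn g s) {a x : α}
    (ha : a ∈ s) (hx : x ∈ s) (hfg : f a = g a) : min (f x) (g x) ≤ f a := by
  rcases le_total x a with hxa | hax
  · exact (min_le_left _ _).trans (hf hx ha hxa)
  · exact (min_le_right _ _).trans (hfg ▸ hg ha hx hax)

namespace Hybrid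

variable {lam : ℝ}

noncomputable def ratio (lam : ℝ) : ℝ := (√(lam ^ 2 + 6 * lam + 1) + lam + 1) / (2 * lam)

noncomputable def crossing (lam : ℝ) : ℝ := (√(lam ^ 2 + 6 * lam + 1) - lam - 1) / (2 * lam)

theorem sq_sqrt_discr (h0 : 0 < lam) : √(lam ^ 2 + 6 * lam + 1) ^ 2 = lam ^ 2 + 6 * lam + 1 :=
  sq_sqrt (by positivity)

theorem add_one_lt_sqrt_discr (h0 : 0 < lam) : lam + 1 < √(lam ^ 2 + 6 * lam + 1) :=
  lt_sqrt_of_sq_lt (by nlinarith)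

theorem crossing_pos (h0 : 0 < lam) : 0 < crossing lam :=
  div_pos (by linarith [add_one_lt_sqrt_discr h0]) (by positivity)

theorem crossing_add (h0 : 0 < lam) : crossing lam + 1 + 1 / lam = ratio lam := by
  unfold crossing ratio
  field_simp
  ring

theorem one_div_mul_crossing (h0 : 0 < lam) : 1 / (lam * crossing lam) = ratio lam := by
  have hs := add_one_lt_sqrt_discr h0
  have hsq := sq_sqrt_discr h0
  unfold crossing ratio
  generalize √(lam ^ 2 + 6 * lam + 1) = s at *
  have hne : s - lam - 1 ≠ 0 := by linarith
  field_simp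
  linear_combination -hsq

theorem min_le_ratio (h0 : 0 < lam) {q : ℝ} (hq : 0 < q) :
    min (q + 1 + 1 / lam) (1 / (lam * q)) ≤ ratio lam := by
  have hmono : MonotoneOn (fun q : ℝ => q + 1 + 1 / lam) (Set.Ioi 0) :=
    fun _ _ _ _ h => by simpa using h
  have hanti : AntitoneOn (fun q : ℝ => 1 / (lam * q)) (Set.Ioi 0) :=
    fun a ha _ _ h => one_div_le_one_div_of_le (mul_pos h0 ha) (by gcongr)
  have key := min_le_of_monotoneOn_of_antitoneOn hmono hanti (crossing_pos h0) hq
    ((crossing_add h0).trans (one_div_mul_crossing h0).symm)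
  rwa [crossing_add h0] at key

end Hybrid

theorem stmt_5_general (lam : ℝ) (h0 : 0 < lam) :
    (∀ q : ℝ, 0 < q →
      min (q + 1 + 1 / lam) (1 / (lam * q)) ≤
        (Real.sqrt (lam ^ 2 + 6 * lam + 1) + lam + 1) / (2 * lam)) ∧
    min ((Real.sqrt (lam ^ 2 + 6 * lam + 1) - lam - 1) / (2 * lam) + 1 + 1 / lam)
        (1 / (lam * ((Real.sqrt (lam ^ 2 + 6 * lam + 1) - lam - 1) / (2 * lam)))) =
      (Real.sqrt (lam ^ 2 + 6 * lam + 1) + lam + 1) / (2 * lam) := by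
  refine ⟨fun q hq => Hybrid.min_le_ratio h0 hq, ?_⟩
  change min (Hybrid.crossing lam + 1 + 1 / lam) (1 / (lam * Hybrid.crossing lam)) = Hybrid.ratio lam
  rw [Hybrid.crossing_add h0, Hybrid.one_div_mul_crossing h0, min_self]

theorem stmt_5 (lam : ℝ) (h0 : 0 < lam) (h1 : lam ≤ 1) :
    (∀ q : ℝ, 0 < q →
      min (q + 1 + 1 / lam) (1 / (lam * q)) ≤
        (Real.sqrt (lam ^ 2 + 6 * lam + 1) + lam + 1) / (2 * lam)) ∧
    min ((Real.sqrt (lam ^ 2 + 6 * lam + 1) - lam - 1) / (2 * lam) + 1 + 1 / lam)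
        (1 / (lam * ((Real.sqrt (lam ^ 2 + 6 * lam + 1) - lam - 1) / (2 * lam)))) =
      (Real.sqrt (lam ^ 2 + 6 * lam + 1) + lam + 1) / (2 * lam) :=
  stmt_5_general lam h0
end

section
/- Let r, cT, cY be nonnegative reals with cY ≤ r and cT > 0, r > 0, and suppose c* ≤ 2r + cT where c* is another nonnegative real. Then min( cY/cT , c*/r ) ≤ 1 + √2. -/
theorem stmt_12 (r cT cY cStar : ℝ) (hr : 0 < r) (hcT : 0 < cT)
    (hcY0 : 0 ≤ cY) (hcY : cY ≤ r) (hcStar0 : 0 ≤ cStar)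
    (hcStar : cStar ≤ 2 * r + cT) :
    min (cY / cT) (cStar / r) ≤ 1 + Real.sqrt 2 := by
  have hs0 : (0:ℝ) ≤ Real.sqrt 2 := Real.sqrt_nonneg 2
  have hs2 : Real.sqrt 2 ^ 2 = 2 := Real.sq_sqrt (by norm_num)
  rcases le_or_gt (r / cT) (1 + Real.sqrt 2) with h | h
  · refine le_trans (min_le_left _ _) (le_trans ?_ h)
    gcongr
  · refine le_trans (min_le_right _ _) ?_
    rw [div_le_iff₀ hr]
    have hrcT : cT * (1 + Real.sqrt 2) < r := by
      rwa [lt_div_iff₀ hcT, mul_comm] at h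
    nlinarith [hcStar]
end
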